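/- Let G be a finite group and 𝒩 a regular subgroup of Perm(G). Then 𝒩 is normalized by the left regular representation λ(G) if and only if its centralizer 𝒩* in Perm(G) is normalized by λ(G). -/

import Mathlib

/-!
Conjugation by `g` carries the centralizer of `s` to the centralizer of `g s g⁻¹`, so whatever
normalizes `𝒩` normalizes `𝒩*`. Conversely, for regular `𝒩` the centralizer `𝒩*` contains the
"right translations" `ν 1 ↦ (ν μ) 1`, which act transitively; a permutation commuting with a
transitive set is determined by its value at `1`, whence `𝒩** = 𝒩`, and the first implication
applied to `𝒩*` gives the second.
-/

open Equiv

def IsRegularSubgroup (G : Type*) [Group G] (𝒟 : Subgroup (Equiv.Perm G)) : Prop :=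
  Function.Bijective (fun δ : ↥𝒟 => (δ : Equiv.Perm G) 1)

theorem Subgroup.normalizer_le_normalizer_centralizer {M : Type*} [Group M] (s : Set M) :
    normalizer s ≤ normalizer (centralizer s : Set M) := by
  intro g hg c
  simp only [SetLike.mem_coe, mem_centralizer_iff]
  refine (MulAut.conj g).forall_congr fun {k} => imp_congr (mem_set_normalizer_iff.mp hg k) ?_
  rw [← (MulAut.conj g).injective.eq_iff, map_mul, map_mul]
  rfl

theorem Equiv.Perm.eq_of_mem_centralizer_of_apply_eq {α : Type*} {T : Set (Perm α)} {a : α}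
    (hT : ∀ x, ∃ τ ∈ T, τ a = x) {σ σ' : Perm α} (hσ : σ ∈ Subgroup.centralizer T)
    (hσ' : σ' ∈ Subgroup.centralizer T) (h : σ a = σ' a) : σ = σ' := by
  ext x
  obtain ⟨τ, hτ, rfl⟩ := hT x
  calc σ (τ a) = τ (σ a) := congr($(hσ τ hτ) a).symm
    _ = τ (σ' a) := by rw [h]
    _ = σ' (τ a) := congr($(hσ' τ hτ) a)

namespace IsRegularSubgroup

variable {G : Type*} [Group G] {𝒩 : Subgroup (Perm G)} (hreg : IsRegularSubgroup G 𝒩)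
include hreg

noncomputable def equiv : 𝒩 ≃ G := Equiv.ofBijective _ hreg

lemma equiv_apply (ν : 𝒩) : hreg.equiv ν = (ν : Perm G) 1 := rfl

lemma equiv_symm_one : hreg.equiv.symm 1 = 1 :=
  (Equiv.symm_apply_eq _).mpr rfl

noncomputable def rightTranslation (μ : 𝒩) : Perm G :=
  (hreg.equiv.symm.trans (Equiv.mulRight μ)).trans hreg.equiv

lemma rightTranslation_apply (μ : 𝒩) (x : G) :
    hreg.rightTranslation μ x = hreg.equiv (hreg.equiv.symm x * μ) := rfl

lemma rightTranslation_apply_one (μ : 𝒩) : hreg.rightTranslation μ 1 = (μ : Perm G) 1 := by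
  rw [hreg.rightTranslation_apply, hreg.equiv_symm_one, one_mul, hreg.equiv_apply]

lemma rightTranslation_mem_centralizer (μ : 𝒩) :
    hreg.rightTranslation μ ∈ Subgroup.centralizer (𝒩 : Set (Perm G)) := by
  intro ν hν
  ext x
  obtain ⟨κ, rfl⟩ := hreg.equiv.surjective x
  have hνκ : (ν : Perm G) (hreg.equiv κ) = hreg.equiv (⟨ν, hν⟩ * κ) := rfl
  simp only [Perm.mul_apply, hreg.rightTranslation_apply, hνκ, Equiv.symm_apply_apply, mul_assoc]
  rfl

lemma exists_mem_centralizer_apply_one (x : G) :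
    ∃ τ ∈ (Subgroup.centralizer (𝒩 : Set (Perm G)) : Set (Perm G)), τ 1 = x :=
  ⟨_, hreg.rightTranslation_mem_centralizer (hreg.equiv.symm x),
    by rw [hreg.rightTranslation_apply_one, ← hreg.equiv_apply, Equiv.apply_symm_apply]⟩

lemma centralizer_centralizer_eq :
    Subgroup.centralizer (Subgroup.centralizer (𝒩 : Set (Perm G)) : Set (Perm G)) = 𝒩 := by
  have hle : 𝒩 ≤ Subgroup.centralizer (Subgroup.centralizer (𝒩 : Set (Perm G))) :=
    Subgroup.le_centralizer_iff.mpr le_rfl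
  refine le_antisymm (fun σ hσ => ?_) hle
  obtain ⟨ν, hν⟩ := hreg.2 (σ 1)
  rw [Perm.eq_of_mem_centralizer_of_apply_eq hreg.exists_mem_centralizer_apply_one hσ
    (hle ν.2) hν.symm]
  exact ν.2

end IsRegularSubgroup

theorem stmt17_general {G : Type*} [Group G]
    (𝒩 : Subgroup (Equiv.Perm G)) (hreg : IsRegularSubgroup G 𝒩) :
    (∀ γ : G, (Equiv.mulLeft γ : Equiv.Perm G) ∈ Subgroup.normalizer (𝒩 : Set (Equiv.Perm G))) ↔
      (∀ γ : G, (Equiv.mulLeft γ : Equiv.Perm G) ∈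
        Subgroup.normalizer
          ((Subgroup.centralizer (𝒩 : Set (Equiv.Perm G)) : Set (Equiv.Perm G)))) := by
  refine ⟨fun h γ => Subgroup.normalizer_le_normalizer_centralizer _ (h γ), fun h γ => ?_⟩
  simpa only [hreg.centralizer_centralizer_eq] using
    Subgroup.normalizer_le_normalizer_centralizer _ (h γ)

/-- A regular subgroup `𝒩` of `Perm G` is normalized by the left regular representation
`λ(G)` if and only if its centralizer `𝒩*` in `Perm G` is normalized by `λ(G)`. -/
theorem stmt17 {G : Type*} [Group G] [Finite G]
    (𝒩 : Subgroup (Equiv.Perm G)) (hreg : IsRegularSubgroup G 𝒩) :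
    (∀ γ : G, (Equiv.mulLeft γ : Equiv.Perm G) ∈ Subgroup.normalizer (𝒩 : Set (Equiv.Perm G))) ↔
      (∀ γ : G, (Equiv.mulLeft γ : Equiv.Perm G) ∈
        Subgroup.normalizer
          ((Subgroup.centralizer (𝒩 : Set (Equiv.Perm G)) : Set (Equiv.Perm G)))) :=
  stmt17_general 𝒩 hreg
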